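/- The sum over all isomorphism classes of elliptic curves over F_p of 1/#Aut_{F_p}(E) equals p (the mass formula), i.e. Σ_E 1/#Aut_{F_p}(E) = p. -/

import Mathlib

open WeierstrassCurve

/-- An elliptic curve over `F`: a Weierstrass curve with invertible discriminant. -/
def EllCurve (F : Type*) [CommRing F] := {W : WeierstrassCurve F // W.IsElliptic}

/-- Two elliptic curves are isomorphic over `F` iff they differ by a change of variables. -/
def isoSetoid (F : Type*) [CommRing F] : Setoid (EllCurve F) :=
  Setoid.comap Subtype.val
    (MulAction.orbitRel (WeierstrassCurve.VariableChange F) (WeierstrassCurve F))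

/-- Isomorphism classes over `F` of elliptic curves over `F`. -/
def EllCurveClasses (F : Type*) [CommRing F] := Quotient (isoSetoid F)

/-- The order of the automorphism group of `E` over `F`, i.e. of the stabilizer of `E`
under changes of variables. -/
noncomputable def autCard {F : Type*} [CommRing F] (E : EllCurve F) : ℕ :=
  Nat.card {C : WeierstrassCurve.VariableChange F // C • E.1 = E.1}

/-- The number of `F`-rational points of `E` (including the point at infinity). -/
noncomputable def numPoints {F : Type*} [CommRing F] (E : EllCurve F) : ℕ :=
  Nat.card E.1.toAffine.Point

/-!
By orbit–stabilizer, `∑ 1 / #Aut(E)` over the classes is `#{elliptic Weierstrass curves}` divided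
by `#{changes of variables} = (p - 1)p³`. A singular Weierstrass curve has exactly one singular
point, and it is rational: for `p > 3` it comes from the double root of the short Weierstrass
cubic, for `p ≤ 3` an exhaustive search finds it. Translating it to the origin gives
`y² + a₁xy = x³ + a₂x²`, so the singular curves are parametrised by the point and `(a₁, a₂)`:
there are `p⁴` of them, and the sum is `(p⁵ - p⁴) / ((p - 1)p³) = p`.
-/

namespace WeierstrassCurve

section SingularPoint

variable {R : Type*} [CommRing R] (W : WeierstrassCurve R)

def IsSingularPoint (x y : R) : Prop :=
  W.toAffine.Equation x y ∧ ¬W.toAffine.Nonsingular x y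

lemma isSingularPoint_iff (x y : R) : W.IsSingularPoint x y ↔
    y ^ 2 + W.a₁ * x * y + W.a₃ * y - (x ^ 3 + W.a₂ * x ^ 2 + W.a₄ * x + W.a₆) = 0 ∧
      W.a₁ * y - (3 * x ^ 2 + 2 * W.a₂ * x + W.a₄) = 0 ∧ 2 * y + W.a₁ * x + W.a₃ = 0 := by
  rw [IsSingularPoint, Affine.nonsingular_iff', Affine.equation_iff']
  tauto

lemma isSingularPoint_zero_iff : W.IsSingularPoint 0 0 ↔ W.a₃ = 0 ∧ W.a₄ = 0 ∧ W.a₆ = 0 := by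
  rw [IsSingularPoint, Affine.equation_zero, Affine.nonsingular_zero]
  tauto

lemma Δ_eq_zero_of_isSingularPoint {x y : R} (h : W.IsSingularPoint x y) : W.Δ = 0 := by
  by_contra hΔ
  exact h.2 ((Affine.equation_iff_nonsingular_of_Δ_ne_zero hΔ).mp h.1)

/-- The change of variables that moves the point `(x, y)` to the origin. -/
def VariableChange.translation (x y : R) : VariableChange R := ⟨1, x, 0, y⟩

open VariableChange

lemma VariableChange.translation_mul (x y x' y' : R) :
    translation x y * translation x' y' = translation (x + x') (y + y') := by
  ext <;> simp [translation, mul_def]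

lemma isSingularPoint_iff_translation (x y : R) :
    W.IsSingularPoint x y ↔ (translation x y • W).IsSingularPoint 0 0 := by
  rw [IsSingularPoint, IsSingularPoint, Affine.equation_iff_variableChange,
    Affine.nonsingular_iff_variableChange]
  rfl

lemma isSingularPoint_translation_smul_iff (x y x' y' : R) :
    (translation x y • W).IsSingularPoint x' y' ↔ W.IsSingularPoint (x + x') (y + y') := by
  rw [isSingularPoint_iff_translation, ← mul_smul, translation_mul,
    ← isSingularPoint_iff_translation, add_comm x', add_comm y']

/-- A change of variables `C` moves the point `(C.r, C.t)` to the origin. -/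
lemma isSingularPoint_of_smul {C : VariableChange R} (h : (C • W).IsSingularPoint 0 0) :
    W.IsSingularPoint C.r C.t := by
  rw [isSingularPoint_zero_iff] at h
  rw [isSingularPoint_iff_translation, isSingularPoint_zero_iff]
  obtain ⟨h₃, h₄, h₆⟩ := h
  simp only [variableChange_a₃, variableChange_a₄, variableChange_a₆, translation,
    (C.u⁻¹.isUnit.pow _).mul_right_eq_zero, inv_one, Units.val_one, one_pow, one_mul]
    at h₃ h₄ h₆ ⊢
  exact ⟨by linear_combination h₃, by linear_combination h₄ + C.s * h₃, by linear_combination h₆⟩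

lemma exists_isSingularPoint_of_smul {C : VariableChange R} {x y : R}
    (h : (C • W).IsSingularPoint x y) : ∃ x y, W.IsSingularPoint x y := by
  rw [isSingularPoint_iff_translation, ← mul_smul] at h
  exact ⟨_, _, W.isSingularPoint_of_smul h⟩

lemma IsSingularPoint.eq_zero_of_isSingularPoint_zero [IsDomain R] {x y : R}
    (h₀ : W.IsSingularPoint 0 0) (h : W.IsSingularPoint x y) : x = 0 ∧ y = 0 := by
  obtain ⟨h₃, h₄, h₆⟩ := (W.isSingularPoint_zero_iff).mp h₀
  obtain ⟨hW, hX, hY⟩ := (W.isSingularPoint_iff x y).mp h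
  have hx : x ^ 3 = 0 := by
    linear_combination 2 * hW - y * hY - x * hX - y * h₃ + x * h₄ + 2 * h₆
  obtain rfl := pow_eq_zero_iff (n := 3) (by norm_num) |>.mp hx
  have hy : y ^ 2 = 0 := by linear_combination hW - y * h₃ + h₆
  exact ⟨rfl, pow_eq_zero_iff (n := 2) (by norm_num) |>.mp hy⟩

lemma IsSingularPoint.unique [IsDomain R] {x y x' y' : R} (h : W.IsSingularPoint x y)
    (h' : W.IsSingularPoint x' y') : x' = x ∧ y' = y := by
  rw [← add_sub_cancel x x', ← add_sub_cancel y y', ← isSingularPoint_translation_smul_iff] at h'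
  rw [isSingularPoint_iff_translation] at h
  obtain ⟨hx, hy⟩ := IsSingularPoint.eq_zero_of_isSingularPoint_zero _ h h'
  exact ⟨sub_eq_zero.mp hx, sub_eq_zero.mp hy⟩

end SingularPoint

section Existence

variable {F : Type*} [Field F]

lemma exists_isSingularPoint_of_isShortNF (W : WeierstrassCurve F) [W.IsShortNF]
    (h2 : (2 : F) ≠ 0) (h3 : (3 : F) ≠ 0) (hΔ : W.Δ = 0) : ∃ x y, W.IsSingularPoint x y := by
  have hdisc : 4 * W.a₄ ^ 3 + 27 * W.a₆ ^ 2 = 0 := by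
    rw [Δ_of_isShortNF] at hΔ
    refine (mul_eq_zero.mp hΔ).resolve_left ?_
    rw [show (-16 : F) = -2 ^ 4 by norm_num]
    exact neg_ne_zero.mpr (pow_ne_zero 4 h2)
  simp only [isSingularPoint_iff, a₁_of_isShortNF, a₂_of_isShortNF, a₃_of_isShortNF]
  by_cases ha : W.a₄ = 0
  · have hb : W.a₆ = 0 := by
      have : (3 : F) ^ 3 * W.a₆ ^ 2 = 0 := by linear_combination hdisc - 4 * W.a₄ ^ 2 * ha
      exact pow_eq_zero_iff two_ne_zero |>.mp <|
        (mul_eq_zero.mp this).resolve_left (pow_ne_zero 3 h3)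
    exact ⟨0, 0, by simp [ha, hb]⟩
  · -- `x₀` is the double root of `x³ + a₄x + a₆`
    set x₀ := -3 * W.a₆ / (2 * W.a₄) with hx₀
    have hX : 3 * x₀ ^ 2 + W.a₄ = 0 := by
      rw [hx₀]
      field_simp
      linear_combination hdisc
    have hW : x₀ ^ 3 + W.a₄ * x₀ + W.a₆ = 0 := by
      rw [hx₀]
      field_simp
      linear_combination (-W.a₆) * hdisc
    exact ⟨x₀, 0, by linear_combination -hW, by linear_combination -hX, by ring⟩

lemma exists_isSingularPoint_of_Δ_eq_zero (W : WeierstrassCurve F) (h2 : (2 : F) ≠ 0)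
    (h3 : (3 : F) ≠ 0) (hΔ : W.Δ = 0) : ∃ x y, W.IsSingularPoint x y := by
  let := invertibleOfNonzero h2
  let := invertibleOfNonzero h3
  have hΔ' : (W.toShortNF • W).Δ = 0 := by rw [variableChange_Δ, hΔ, mul_zero]
  obtain ⟨x, y, h⟩ := exists_isSingularPoint_of_isShortNF _ h2 h3 hΔ'
  exact W.exists_isSingularPoint_of_smul h

lemma exists_isSingularPoint_of_Δ_eq_zero_zmod_two_or_three {p : ℕ} (hp : p = 2 ∨ p = 3)
    (W : WeierstrassCurve (ZMod p)) (hΔ : W.Δ = 0) : ∃ x y, W.IsSingularPoint x y := by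
  simp only [isSingularPoint_iff]
  obtain ⟨a₁, a₂, a₃, a₄, a₆⟩ := W
  revert a₁ a₂ a₃ a₄ a₆
  rcases hp with rfl | rfl <;> decide

lemma exists_isSingularPoint_of_Δ_eq_zero_zmod {p : ℕ} [Fact p.Prime]
    (W : WeierstrassCurve (ZMod p)) (hΔ : W.Δ = 0) : ∃ x y, W.IsSingularPoint x y := by
  by_cases hp : p = 2 ∨ p = 3
  · exact exists_isSingularPoint_of_Δ_eq_zero_zmod_two_or_three hp W hΔ
  push Not at hp
  have hne {q : ℕ} (hq : q.Prime) (hpq : p ≠ q) : (q : ZMod p) ≠ 0 := by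
    rw [Ne, ZMod.natCast_eq_zero_iff, Nat.prime_dvd_prime_iff_eq Fact.out hq]
    exact hpq
  exact W.exists_isSingularPoint_of_Δ_eq_zero (by exact_mod_cast hne Nat.prime_two hp.1)
    (by exact_mod_cast hne Nat.prime_three hp.2) hΔ

end Existence

section Counting

open VariableChange

variable (R : Type*)

def equivProd : WeierstrassCurve R ≃ R × R × R × R × R where
  toFun W := (W.a₁, W.a₂, W.a₃, W.a₄, W.a₆)
  invFun a := ⟨a.1, a.2.1, a.2.2.1, a.2.2.2.1, a.2.2.2.2⟩
  left_inv _ := rfl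
  right_inv _ := rfl

instance [Finite R] : Finite (WeierstrassCurve R) := .of_equiv _ (equivProd R).symm

lemma card_weierstrassCurve : Nat.card (WeierstrassCurve R) = Nat.card R ^ 5 := by
  simp only [Nat.card_congr (equivProd R), Nat.card_prod]
  ring

variable [CommRing R]

def VariableChange.equivProd : VariableChange R ≃ Rˣ × R × R × R where
  toFun C := (C.u, C.r, C.s, C.t)
  invFun a := ⟨a.1, a.2.1, a.2.2.1, a.2.2.2⟩
  left_inv _ := rfl
  right_inv _ := rfl

instance [Finite R] : Finite (VariableChange R) := .of_equiv _ (VariableChange.equivProd R).symm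

lemma card_variableChange : Nat.card (VariableChange R) = Nat.card Rˣ * Nat.card R ^ 3 := by
  simp only [Nat.card_congr (VariableChange.equivProd R), Nat.card_prod]
  ring

def isSingularPointZeroEquiv : {W : WeierstrassCurve R // W.IsSingularPoint 0 0} ≃ R × R where
  toFun W := (W.1.a₁, W.1.a₂)
  invFun a := ⟨⟨a.1, a.2, 0, 0, 0⟩, (isSingularPoint_zero_iff _).mpr ⟨rfl, rfl, rfl⟩⟩
  left_inv W := by
    obtain ⟨h₃, h₄, h₆⟩ := (isSingularPoint_zero_iff _).mp W.2
    ext <;> simp [h₃, h₄, h₆]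
  right_inv _ := rfl

variable {R} in
lemma isSingularPoint_inv_translation_smul {W : WeierstrassCurve R} (hW : W.IsSingularPoint 0 0)
    (x y : R) : ((translation x y)⁻¹ • W).IsSingularPoint x y := by
  rwa [isSingularPoint_iff_translation, smul_inv_smul]

noncomputable def singularPointEquiv [IsDomain R] :
    (R × R) × {W : WeierstrassCurve R // W.IsSingularPoint 0 0} ≃
      {W : WeierstrassCurve R // ∃ x y, W.IsSingularPoint x y} :=
  Equiv.ofBijective
    (fun P => ⟨(translation P.1.1 P.1.2)⁻¹ • P.2.1, P.1.1, P.1.2,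
      isSingularPoint_inv_translation_smul P.2.2 _ _⟩) <| by
    constructor
    · rintro ⟨⟨x, y⟩, W⟩ ⟨⟨x', y'⟩, W'⟩ h
      have h := congrArg Subtype.val h
      dsimp only at h
      obtain ⟨rfl, rfl⟩ := (isSingularPoint_inv_translation_smul W.2 x y).unique _
        (h ▸ isSingularPoint_inv_translation_smul W'.2 x' y')
      rw [smul_left_cancel_iff] at h
      rw [Subtype.ext h]
    · rintro ⟨W, x, y, h⟩
      exact ⟨⟨(x, y), ⟨translation x y • W, (W.isSingularPoint_iff_translation x y).mp h⟩⟩,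
        Subtype.ext (inv_smul_smul _ _)⟩

lemma card_exists_isSingularPoint [IsDomain R] [Finite R] :
    Nat.card {W : WeierstrassCurve R // ∃ x y, W.IsSingularPoint x y} = Nat.card R ^ 4 := by
  rw [← Nat.card_congr (singularPointEquiv R),
    Nat.card_congr ((Equiv.refl _).prodCongr (isSingularPointZeroEquiv R))]
  simp only [Nat.card_prod]
  ring

lemma card_ellCurve_add_card_Δ_eq_zero (F : Type*) [Field F] [Finite F] :
    Nat.card (EllCurve F) + Nat.card {W : WeierstrassCurve F // W.Δ = 0} = Nat.card F ^ 5 := by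
  classical
  have e : EllCurve F ≃ {W : WeierstrassCurve F // ¬W.Δ = 0} :=
    Equiv.subtypeEquivRight fun W => by rw [isElliptic_iff, isUnit_iff_ne_zero]
  rw [Nat.card_congr e, add_comm, ← Nat.card_sum, Nat.card_congr (Equiv.sumCompl _),
    card_weierstrassCurve]

end Counting

end WeierstrassCurve

section MassFormula

variable {R : Type*} [CommRing R]

instance [Finite R] : Finite (EllCurve R) := Subtype.finite

def EllCurve.isoClass (E : EllCurve R) : EllCurveClasses R := Quotient.mk (isoSetoid R) E

lemma EllCurve.isoClass_out (C : EllCurveClasses R) : C.out.isoClass = C := Quotient.out_eq C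

def EllCurve.fiberEquivOrbit (E : EllCurve R) :
    {E' : EllCurve R // E'.isoClass = E.isoClass} ≃ MulAction.orbit (VariableChange R) E.1 where
  toFun E' := ⟨E'.1.1, Quotient.exact E'.2⟩
  invFun W := ⟨⟨W.1, by obtain ⟨C, hC⟩ := W.2; have := E.2; rw [← hC]; infer_instance⟩,
    Quotient.sound W.2⟩
  left_inv _ := rfl
  right_inv _ := rfl

lemma EllCurve.card_fiber_mul_autCard (E : EllCurve R) :
    Nat.card {E' : EllCurve R // E'.isoClass = E.isoClass} * autCard E =
      Nat.card (VariableChange R) := by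
  rw [Nat.card_congr (fiberEquivOrbit E),
    Nat.card_congr (MulAction.orbitEquivQuotientStabilizer _ _), mul_comm]
  exact (MulAction.stabilizer (VariableChange R) E.1).card_mul_index

theorem sum_inv_autCard_eq_div [Finite R] [Fintype (EllCurveClasses R)] :
    ∑ C : EllCurveClasses R, 1 / (autCard C.out : ℚ) =
      Nat.card (EllCurve R) / Nat.card (VariableChange R) := by
  have hclass : Nat.card (EllCurve R) =
      ∑ C : EllCurveClasses R, Nat.card {E : EllCurve R // E.isoClass = C} := by
    rw [← Nat.card_sigma, Nat.card_congr (Equiv.sigmaFiberEquiv _)]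
  rw [hclass, Nat.cast_sum, Finset.sum_div]
  refine Finset.sum_congr rfl fun C _ => ?_
  have h := C.out.card_fiber_mul_autCard
  rw [EllCurve.isoClass_out] at h
  obtain ⟨hfiber, haut⟩ := Nat.mul_ne_zero_iff.mp (h ▸ Nat.card_pos.ne')
  rw [← h, Nat.cast_mul]
  field_simp

theorem sum_inv_autCard_eq_card (F : Type*) [Field F] [Finite F] [Fintype (EllCurveClasses F)]
    (hsing : ∀ W : WeierstrassCurve F, W.Δ = 0 → ∃ x y, W.IsSingularPoint x y) :
    ∑ C : EllCurveClasses F, 1 / (autCard C.out : ℚ) = Nat.card F := by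
  have hΔ : Nat.card {W : WeierstrassCurve F // W.Δ = 0} = Nat.card F ^ 4 := by
    rw [← card_exists_isSingularPoint F]
    exact Nat.card_congr <| Equiv.subtypeEquivRight fun W =>
      ⟨hsing W, fun ⟨_, _, h⟩ => W.Δ_eq_zero_of_isSingularPoint h⟩
  have hEll : (Nat.card (EllCurve F) : ℚ) = Nat.card F ^ 5 - Nat.card F ^ 4 := by
    rw [eq_sub_iff_add_eq]
    exact_mod_cast hΔ ▸ card_ellCurve_add_card_Δ_eq_zero F
  have hq : 1 < Nat.card F := Finite.one_lt_card
  have hq' : (Nat.card F : ℚ) - 1 ≠ 0 := sub_ne_zero.mpr (by exact_mod_cast hq.ne')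
  rw [sum_inv_autCard_eq_div, card_variableChange, Nat.card_units, hEll, Nat.cast_mul,
    Nat.cast_sub hq.le]
  push_cast
  field_simp

end MassFormula

theorem elliptic_curve_mass_formula_general (p : ℕ) [Fact p.Prime]
    [Fintype (EllCurveClasses (ZMod p))] :
    ∑ C : EllCurveClasses (ZMod p), 1 / (autCard C.out : ℚ) = p := by
  rw [sum_inv_autCard_eq_card (ZMod p) fun W => exists_isSingularPoint_of_Δ_eq_zero_zmod W,
    Nat.card_zmod]

/-- mass formula: the sum over all isomorphism classes of elliptic curves
over `F_p` of `1/#Aut_{F_p}(E)` equals `p`. -/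
theorem elliptic_curve_mass_formula (p : ℕ) (hp : p.Prime) [Fact p.Prime]
    [Fintype (EllCurveClasses (ZMod p))] :
    ∑ C : EllCurveClasses (ZMod p), 1 / (autCard C.out : ℚ) = p :=
  elliptic_curve_mass_formula_general p
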